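/- Let d ≥ 2 and n ≥ 1 be integers, let v ∈ ℤ^d have every entry coprime to n, let δ ∈ ℤ^d, and let 1 ≤ k < l ≤ d. Then the coordinate projection π_{k,l} : ℝ^d → ℝ², (u₁,…,u_d) ↦ (u_k, u_l), is injective on L(n,v,δ), and its image satisfies π_{k,l}(L(n,v,δ)) = L(n, (v_k, v_l), (δ_k, δ_l)). -/

import Mathlib

open Finset

/-- Distance from a real number to the nearest integer: w(t) = min over z in ZZ of |t - z|. -/
noncomputable def nid (t : ℝ) : ℝ := ⨅ z : ℤ, |t - (z : ℝ)|

/-- Wrap-around distance on ℝ^d. -/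
noncomputable def wdist {d : ℕ} (u : Fin d → ℝ) : ℝ := Real.sqrt (∑ k, nid (u k) ^ 2)

/-- Lattice-based Latin hypercube design
L(n,v,δ) = { z + i·v/n + δ/n + 1_d/(2n) : z ∈ ℤ^d, i ∈ ℤ } ∩ [0,1]^d. -/
def LHDset (d n : ℕ) (v : Fin d → ℤ) (δ : Fin d → ℝ) : Set (Fin d → ℝ) :=
  {x | (∃ (z : Fin d → ℤ) (i : ℤ),
          x = fun k => (z k : ℝ) + (i : ℝ) * (v k : ℝ) / n + δ k / n + 1 / (2 * n)) ∧
       ∀ k, x k ∈ Set.Icc (0 : ℝ) 1}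


/-! Writing `c = n z + i v + δ`, a point of `L(n,v,δ)` has coordinates `(c_m + 1/2)/n`, and lying in
`[0,1]` forces `0 ≤ c_m < n`, i.e. `c_m = (i v_m + δ_m) mod n`. So `L(n,v,δ)` is the orbit of the
residue `i mod n`, and any sub-family of coordinates of a point is the point of the design built
from the corresponding entries of `v` and `δ`. Since `v_k` is a unit mod `n`, the single coordinate
`x_k` already recovers `i mod n`, whence injectivity. -/

noncomputable def lhdPoint {ι : Type*} (n : ℕ) (v δ : ι → ℤ) (i : ℤ) : ι → ℝ :=
  fun m => ((((i * v m + δ m) % n : ℤ) : ℝ) + 1 / 2) / n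

lemma int_add_half_div_mem_Icc_iff {n : ℕ} (hn : 0 < n) (a : ℤ) :
    ((a : ℝ) + 1 / 2) / n ∈ Set.Icc (0 : ℝ) 1 ↔ 0 ≤ a ∧ a < n := by
  have hn' : (0 : ℝ) < n := by exact_mod_cast hn
  rw [Set.mem_Icc, le_div_iff₀ hn', div_le_one hn', zero_mul]
  constructor
  · rintro ⟨h0, h1⟩
    have h0' : (-1 : ℝ) < a := by linarith
    have h1' : (a : ℝ) < n := by linarith
    have h0'' : (-1 : ℤ) < a := by exact_mod_cast h0'
    exact ⟨by omega, by exact_mod_cast h1'⟩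
  · rintro ⟨h0, h1⟩
    have h0' : (0 : ℝ) ≤ a := by exact_mod_cast h0
    have h1' : (a : ℝ) + 1 ≤ n := by exact_mod_cast h1
    constructor <;> linarith

lemma lattice_coord_eq {n : ℕ} (hn : 0 < n) (z i c δ : ℤ) :
    (z : ℝ) + i * c / n + δ / n + 1 / (2 * n) = (((n * z + i * c + δ : ℤ) : ℝ) + 1 / 2) / n := by
  have hn' : (n : ℝ) ≠ 0 := by positivity
  push_cast
  field_simp

theorem LHDset_eq_range {d n : ℕ} (hn : 0 < n) (v δ : Fin d → ℤ) :
    LHDset d n v (fun m => (δ m : ℝ)) = Set.range (lhdPoint n v δ) := by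
  ext x
  constructor
  · rintro ⟨⟨z, i, rfl⟩, hx⟩
    refine ⟨i, funext fun m => ?_⟩
    have hc := hx m
    simp only [lattice_coord_eq hn, int_add_half_div_mem_Icc_iff hn] at hc ⊢
    rw [lhdPoint, ← Int.emod_eq_of_lt hc.1 hc.2, add_assoc, Int.mul_add_emod_self_left]
  · rintro ⟨i, rfl⟩
    refine ⟨⟨fun m => -((i * v m + δ m) / n), i, funext fun m => ?_⟩, fun m => ?_⟩
    · rw [lattice_coord_eq hn, lhdPoint, Int.emod_def]
      ring_nf
    · rw [lhdPoint, int_add_half_div_mem_Icc_iff hn]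
      have hn' : (n : ℤ) ≠ 0 := by positivity
      exact ⟨Int.emod_nonneg _ hn', Int.emod_lt_of_pos _ (by positivity)⟩

lemma lhdPoint_congr {ι : Type*} {n : ℕ} (v δ : ι → ℤ) {i j : ℤ} (h : i ≡ j [ZMOD n]) :
    lhdPoint n v δ i = lhdPoint n v δ j :=
  funext fun m => by
    rw [lhdPoint, lhdPoint, (h.mul_right (v m)).add_right (δ m)]

lemma Int.ModEq.cancel_right_of_isCoprime {n a b c : ℤ} (hc : IsCoprime c n)
    (h : a * c ≡ b * c [ZMOD n]) : a ≡ b [ZMOD n] :=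
  Int.modEq_iff_dvd.2 <| hc.symm.dvd_of_dvd_mul_right <| by
    rw [sub_mul]
    exact Int.modEq_iff_dvd.1 h

lemma modEq_of_lhdPoint_apply_eq {ι : Type*} {n : ℕ} (hn : 0 < n) {v : ι → ℤ} (δ : ι → ℤ)
    {m : ι} (hm : IsCoprime (v m) n) {i j : ℤ}
    (h : lhdPoint n v δ i m = lhdPoint n v δ j m) : i ≡ j [ZMOD n] := by
  have hn' : (n : ℝ) ≠ 0 := by positivity
  simp only [lhdPoint, div_left_inj' hn', add_left_inj, Int.cast_inj] at h
  exact (Int.ModEq.add_right_cancel' (δ m) h).cancel_right_of_isCoprime hm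

theorem stmt_11_general (d n : ℕ) (hn : 1 ≤ n) (v δ : Fin d → ℤ)
    (hco : ∀ k, IsCoprime (v k) (n : ℤ)) (k l : Fin d) :
    Set.InjOn (fun x : Fin d → ℝ => ![x k, x l]) (LHDset d n v (fun k => (δ k : ℝ))) ∧
    (fun x : Fin d → ℝ => ![x k, x l]) '' (LHDset d n v (fun k => (δ k : ℝ)))
      = LHDset 2 n ![v k, v l] (fun j => ((![δ k, δ l] j : ℤ) : ℝ)) := by
  rw [LHDset_eq_range hn, LHDset_eq_range hn]
  refine ⟨?_, ?_⟩
  · rintro _ ⟨i, rfl⟩ _ ⟨j, rfl⟩ h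
    exact lhdPoint_congr v δ (modEq_of_lhdPoint_apply_eq hn δ (hco k) (congrFun h 0))
  · rw [← Set.range_comp]
    congr 1
    funext i m
    fin_cases m <;> rfl

/-- the coordinate projection onto coordinates k < l is injective on
L(n,v,δ), and the image is L(n, (v_k, v_l), (δ_k, δ_l)). -/
theorem stmt_11 (d n : ℕ) (hd : 2 ≤ d) (hn : 1 ≤ n) (v δ : Fin d → ℤ)
    (hco : ∀ k, IsCoprime (v k) (n : ℤ)) (k l : Fin d) (hkl : k < l) :
    Set.InjOn (fun x : Fin d → ℝ => ![x k, x l]) (LHDset d n v (fun k => (δ k : ℝ))) ∧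
    (fun x : Fin d → ℝ => ![x k, x l]) '' (LHDset d n v (fun k => (δ k : ℝ)))
      = LHDset 2 n ![v k, v l] (fun j => ((![δ k, δ l] j : ℤ) : ℝ)) :=
  stmt_11_general d n hn v δ hco k l
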